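/- arXiv:1107.0504 — 4 statements merged into one kernel-verified Lean document; each statement's English description precedes it below -/
import Mathlib

section
/- The number of elements of GL_n(F_q) (n ≥ 2) that are conjugate to the transvection d_1 (the identity matrix with an additional 1 in position (1,2)) equals (q^n - 1)(q^{n-1} - 1)/(q - 1). -/
/-!
Every conjugate `P d₁ P⁻¹` of `d₁ = 1 + e₀ e₁ᵀ` is `1 + v wᵀ` with `v = P e₀`, `wᵀ = e₁ᵀ P⁻¹`
nonzero and `w ⬝ v = 0`. Conversely each such `1 + v wᵀ` is conjugate to `d₁`: in a basis whose
`0`-th vector is `v`, whose `1`-st vector `u` has `w ⬝ u = 1` and whose other vectors lie in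
`ker w`, it has matrix `d₁`. The map `(v, w) ↦ 1 + v wᵀ` is therefore onto the conjugacy class,
and its fibres are the free orbits `(c v, c⁻¹ w)`, `c ∈ Fˣ`. There are `(qⁿ - 1)(qⁿ⁻¹ - 1)`
pairs: `qⁿ - 1` choices of `v`, then `qⁿ⁻¹ - 1` nonzero `w` in a hyperplane.
-/

open Matrix Module Submodule

theorem Nat.card_eq_mul_of_nonempty_fiber_equiv {α β γ : Type*} (f : α → β)
    (h : ∀ b, Nonempty ({a // f a = b} ≃ γ)) : Nat.card α = Nat.card β * Nat.card γ := by
  rw [← Nat.card_prod, Nat.card_congr ((Equiv.sigmaFiberEquiv f).symm.trans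
    (Equiv.sigmaEquivProdOfEquiv fun b => (h b).some))]

theorem Nat.card_subtype_ne (α : Type*) [Finite α] (a : α) :
    Nat.card {x // x ≠ a} = Nat.card α - 1 := by
  have := Fintype.ofFinite α
  classical
  simp [Nat.card_eq_fintype_card, Fintype.card_subtype_compl]

theorem Module.Basis.exists_apply_eq {K V κ : Type*} [Field K] [AddCommGroup V] [Module K V]
    [Fintype κ] (hκ : Fintype.card κ = finrank K V) (i : κ) {v : V} (hv : v ≠ 0) :
    ∃ b : Basis κ K V, b i = v := by
  classical
  have : FiniteDimensional K V :=
    Module.finite_of_finrank_pos (hκ ▸ Fintype.card_pos_iff.mpr ⟨i⟩)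
  have hv₁ : LinearIndepOn K id ({v} : Set V) := LinearIndepOn.singleton hv
  let b₀ := Basis.extend hv₁
  let vᵢ : hv₁.extend (Set.subset_univ _) := ⟨v, hv₁.subset_extend _ rfl⟩
  let e₀ := b₀.indexEquiv ((finBasisOfFinrankEq K V hκ.symm).reindex (Fintype.equivFin κ).symm)
  refine ⟨b₀.reindex (e₀.trans (Equiv.swap (e₀ vᵢ) i)), ?_⟩
  simp [Basis.reindex_apply, b₀, vᵢ]

def transvectionPairs (ι R : Type*) [Fintype ι] [Semiring R] : Set ((ι → R) × (ι → R)) :=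
  {p | p.1 ≠ 0 ∧ p.2 ≠ 0 ∧ p.2 ⬝ᵥ p.1 = 0}

namespace Matrix

section RankOne

variable {m n K : Type*} [Field K]

theorem vecMulVec_units_smul_inv_smul (c : Kˣ) (v : m → K) (w : n → K) :
    vecMulVec (c • v) (c⁻¹ • w) = vecMulVec v w := by
  rw [smul_vecMulVec, vecMulVec_smul, smul_smul, mul_inv_cancel, one_smul]

theorem vecMulVec_eq_vecMulVec_iff {v v' : m → K} {w w' : n → K} (hv : v ≠ 0) (hw : w ≠ 0) :
    vecMulVec v' w' = vecMulVec v w ↔ ∃ c : Kˣ, v' = c • v ∧ w' = c⁻¹ • w := by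
  refine ⟨fun h => ?_, fun ⟨c, hv', hw'⟩ => hv' ▸ hw' ▸ vecMulVec_units_smul_inv_smul c v w⟩
  have entry (x : m) (y : n) : v' x * w' y = v x * w y := congrFun₂ h x y
  obtain ⟨a, ha⟩ := Function.ne_iff.mp hv
  obtain ⟨b, hb⟩ := Function.ne_iff.mp hw
  rw [Pi.zero_apply] at ha hb
  have hab : v' a * w' b ≠ 0 := entry a b ▸ mul_ne_zero ha hb
  refine ⟨Units.mk0 (v' a / v a) (div_ne_zero (left_ne_zero_of_mul hab) ha),
    funext fun x => ?_, funext fun y => ?_⟩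
  · simp only [Pi.smul_apply, Units.smul_def, Units.val_mk0, smul_eq_mul]
    apply mul_right_cancel₀ (right_ne_zero_of_mul hab)
    field_simp
    linear_combination v a * entry x b - v x * entry a b
  · simp only [Pi.smul_apply, Units.smul_def, Units.val_inv_eq_inv_val, Units.val_mk0, smul_eq_mul]
    field_simp [left_ne_zero_of_mul hab]
    linear_combination entry a y

end RankOne

namespace GeneralLinearGroup

section CommRing

variable {ι R : Type*} [Fintype ι] [DecidableEq ι] [CommRing R]

def oneAddVecMulVec (v w : ι → R) (h : w ⬝ᵥ v = 0) : GL ι R where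
  val := 1 + vecMulVec v w
  inv := 1 - vecMulVec v w
  val_inv := by
    rw [add_mul, mul_sub, mul_sub, vecMulVec_mul_vecMulVec, h]
    simp
  inv_val := by
    rw [sub_mul, mul_add, mul_add, vecMulVec_mul_vecMulVec, h]
    simp

@[simp]
theorem coe_oneAddVecMulVec (v w : ι → R) (h : w ⬝ᵥ v = 0) :
    (oneAddVecMulVec v w h : Matrix ι ι R) = 1 + vecMulVec v w :=
  rfl

theorem coe_conj_of_eq_one_add_vecMulVec (P g : GL ι R) {v w : ι → R}
    (hg : (g : Matrix ι ι R) = 1 + vecMulVec v w) :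
    ((P * g * P⁻¹ : GL ι R) : Matrix ι ι R) =
      1 + vecMulVec ((P : Matrix ι ι R) *ᵥ v) (w ᵥ* (P⁻¹ : GL ι R)) := by
  rw [Units.val_mul, Units.val_mul, hg, mul_add, add_mul, mul_one, ← Units.val_mul,
    mul_inv_cancel, Units.val_one, mul_vecMulVec, vecMulVec_mul]

end CommRing

end GeneralLinearGroup

end Matrix

section Field

variable {K ι : Type*} [Field K] [Fintype ι] [DecidableEq ι]

theorem exists_basis_apply_eq_and_dotProduct_eq_single {i j : ι} (hij : i ≠ j) {v w : ι → K}
    (hv : v ≠ 0) (hw : w ≠ 0) (hwv : w ⬝ᵥ v = 0) :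
    ∃ b : Basis ι K (ι → K), b i = v ∧ ∀ k, w ⬝ᵥ b k = (Pi.single j 1 : ι → K) k := by
  set f : Dual K (ι → K) := dotProductEquiv K ι w
  have hf_apply (x : ι → K) : f x = w ⬝ᵥ x := rfl
  have hf : f ≠ 0 := (LinearEquiv.map_ne_zero_iff _).mpr hw
  obtain ⟨u, hu⟩ := LinearMap.surjective hf 1
  have hcard : Fintype.card {k // k ≠ j} = finrank K (LinearMap.ker f) := by
    have := f.finrank_ker_add_one_of_ne_zero hf
    rw [finrank_fintype_fun_eq_card] at this
    rw [Fintype.card_subtype_compl, Fintype.card_subtype_eq]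
    omega
  obtain ⟨c, hc⟩ := Basis.exists_apply_eq hcard ⟨i, hij⟩ (v := ⟨v, hwv⟩) (fun h => hv congr($h.1))
  let b : ι → ι → K := fun k => if h : k = j then u else c ⟨k, h⟩
  have hker : LinearMap.ker f ≤ span K (Set.range b) := by
    rw [← map_subtype_top (LinearMap.ker f), ← c.span_eq, map_span, ← Set.range_comp]
    exact span_mono (Set.range_subset_iff.mpr fun k => ⟨k, dif_neg k.2⟩)
  have hspan : ⊤ ≤ span K (Set.range b) := by
    intro x _
    have hx : x - f x • u ∈ LinearMap.ker f := by simp [hu]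
    have hu_mem : u ∈ span K (Set.range b) := subset_span ⟨j, dif_pos rfl⟩
    simpa using add_mem (hker hx) (smul_mem _ (f x) hu_mem)
  refine ⟨basisOfTopLeSpanOfCardEqFinrank b hspan (by simp), ?_, fun k => ?_⟩
  · simp [b, hij, hc]
  · by_cases hk : k = j
    · subst hk
      simpa [b, hf_apply] using hu
    · rw [coe_basisOfTopLeSpanOfCardEqFinrank, Pi.single_eq_of_ne hk]
      simp only [b, dif_neg hk]
      exact (c ⟨k, hk⟩).2

theorem card_ne_zero_and_dotProduct_eq_zero [Fintype K] {v : ι → K} (hv : v ≠ 0) :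
    Nat.card {w : ι → K // w ≠ 0 ∧ w ⬝ᵥ v = 0} = Fintype.card K ^ (Fintype.card ι - 1) - 1 := by
  set f : Dual K (ι → K) := dotProductEquiv K ι v
  have hf : f ≠ 0 := (LinearEquiv.map_ne_zero_iff _).mpr hv
  have hrank := f.finrank_ker_add_one_of_ne_zero hf
  rw [finrank_fintype_fun_eq_card] at hrank
  have e : {w : ι → K // w ≠ 0 ∧ w ⬝ᵥ v = 0} ≃ {x : LinearMap.ker f // x ≠ 0} :=
    (Equiv.subtypeEquivRight fun w => by simp [f, dotProduct_comm, and_comm]).trans <|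
      (Equiv.subtypeSubtypeEquivSubtypeInter (· ∈ LinearMap.ker f) (· ≠ 0)).symm.trans <|
        Equiv.subtypeEquivRight fun x => by simp
  rw [Nat.card_congr e, Nat.card_subtype_ne, natCard_eq_pow_finrank (K := K),
    Nat.card_eq_fintype_card]
  congr 2
  omega

theorem card_transvectionPairs [Fintype K] :
    Nat.card (transvectionPairs ι K) =
      (Fintype.card K ^ Fintype.card ι - 1) * (Fintype.card K ^ (Fintype.card ι - 1) - 1) := by
  classical
  let e : transvectionPairs ι K ≃
      Σ v : {v : ι → K // v ≠ 0}, {w : ι → K // w ≠ 0 ∧ w ⬝ᵥ v = 0} :=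
    { toFun := fun p => ⟨⟨p.1.1, p.2.1⟩, p.1.2, p.2.2⟩
      invFun := fun x => ⟨(x.1, x.2), x.1.2, x.2.2⟩ }
  rw [Nat.card_congr e, Nat.card_sigma,
    Finset.sum_congr rfl fun v _ => card_ne_zero_and_dotProduct_eq_zero v.2, Finset.sum_const,
    Finset.card_univ, ← Nat.card_eq_fintype_card, Nat.card_subtype_ne,
    Nat.card_eq_fintype_card, Fintype.card_fun, smul_eq_mul]

namespace Matrix.GeneralLinearGroup

theorem exists_mulVec_single_eq_and_vecMul_eq_single {i j : ι} (hij : i ≠ j) {v w : ι → K}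
    (hv : v ≠ 0) (hw : w ≠ 0) (hwv : w ⬝ᵥ v = 0) :
    ∃ P : GL ι K, (P : Matrix ι ι K) *ᵥ Pi.single i 1 = v ∧
      w ᵥ* (P : Matrix ι ι K) = Pi.single j 1 := by
  obtain ⟨b, hbi, hwb⟩ := exists_basis_apply_eq_and_dotProduct_eq_single hij hv hw hwv
  have hP : IsUnit (Matrix.of fun r k => b k r) :=
    linearIndependent_cols_iff_isUnit.mp b.linearIndependent
  refine ⟨hP.unit, ?_, funext hwb⟩
  rw [IsUnit.unit_spec, mulVec_single_one]
  exact hbi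

theorem isConj_iff_exists_eq_one_add_vecMulVec {i j : ι} (hij : i ≠ j) {d g : GL ι K}
    (hd : (d : Matrix ι ι K) = 1 + vecMulVec (Pi.single i 1) (Pi.single j 1)) :
    IsConj d g ↔ ∃ v w : ι → K, v ≠ 0 ∧ w ≠ 0 ∧ w ⬝ᵥ v = 0 ∧
      (g : Matrix ι ι K) = 1 + vecMulVec v w := by
  constructor
  · intro h
    obtain ⟨P, rfl⟩ := isConj_iff.mp h
    refine ⟨(P : Matrix ι ι K) *ᵥ Pi.single i 1, Pi.single j 1 ᵥ* (P⁻¹ : GL ι K), ?_, ?_, ?_,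
      coe_conj_of_eq_one_add_vecMulVec P d hd⟩
    · intro h0
      have := congrArg (((P⁻¹ : GL ι K) : Matrix ι ι K) *ᵥ ·) h0
      simp only [mulVec_mulVec, ← Units.val_mul, inv_mul_cancel, Units.val_one, one_mulVec,
        mulVec_zero] at this
      simp at this
    · intro h0
      have := congrArg (· ᵥ* (P : Matrix ι ι K)) h0
      simp only [vecMul_vecMul, ← Units.val_mul, inv_mul_cancel, Units.val_one, vecMul_one,
        zero_vecMul] at this
      simp at this
    · rw [← dotProduct_mulVec, mulVec_mulVec, ← Units.val_mul, inv_mul_cancel, Units.val_one,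
        one_mulVec, single_one_dotProduct, Pi.single_eq_of_ne hij.symm]
  · rintro ⟨v, w, hv, hw, hwv, hg⟩
    obtain ⟨P, hPv, hPw⟩ := exists_mulVec_single_eq_and_vecMul_eq_single hij hv hw hwv
    refine isConj_iff.mpr ⟨P, Units.ext ?_⟩
    rw [coe_conj_of_eq_one_add_vecMulVec P d hd, hPv, hg, ← hPw, vecMul_vecMul]
    simp

theorem oneAddVecMulVec_eq_iff {v v' w w' : ι → K} (hv : v ≠ 0) (hw : w ≠ 0)
    (h : w ⬝ᵥ v = 0) (h' : w' ⬝ᵥ v' = 0) :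
    oneAddVecMulVec v' w' h' = oneAddVecMulVec v w h ↔ ∃ c : Kˣ, v' = c • v ∧ w' = c⁻¹ • w := by
  rw [Units.ext_iff, coe_oneAddVecMulVec, coe_oneAddVecMulVec, add_right_inj,
    vecMulVec_eq_vecMulVec_iff hv hw]

theorem card_transvectionPairs_eq_card_isConj_mul {i j : ι} (hij : i ≠ j) {d : GL ι K}
    (hd : (d : Matrix ι ι K) = 1 + vecMulVec (Pi.single i 1) (Pi.single j 1)) :
    Nat.card (transvectionPairs ι K) = Nat.card {g // IsConj d g} * Nat.card Kˣ := by
  have hconj (g : GL ι K) := isConj_iff_exists_eq_one_add_vecMulVec hij hd (g := g)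
  let φ (p : transvectionPairs ι K) : {g // IsConj d g} :=
    ⟨oneAddVecMulVec p.1.1 p.1.2 p.2.2.2, (hconj _).mpr ⟨_, _, p.2.1, p.2.2.1, p.2.2.2, rfl⟩⟩
  refine Nat.card_eq_mul_of_nonempty_fiber_equiv φ fun g => ?_
  obtain ⟨v, w, hv, hw, hwv, hg⟩ := (hconj g).mp g.2
  have hg : g.1 = oneAddVecMulVec v w hwv := Units.ext hg
  have hdot (c : Kˣ) : (c⁻¹ • w) ⬝ᵥ (c • v) = 0 := by simp [hwv]
  let ψ (c : Kˣ) : {p // φ p = g} :=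
    ⟨⟨(c • v, c⁻¹ • w), (smul_ne_zero_iff_ne c).mpr hv, (smul_ne_zero_iff_ne _).mpr hw, hdot c⟩,
      Subtype.ext (hg ▸ (oneAddVecMulVec_eq_iff hv hw hwv (hdot c)).mpr ⟨c, rfl, rfl⟩)⟩
  refine ⟨(Equiv.ofBijective ψ ⟨fun c c' hcc' => ?_, fun p => ?_⟩).symm⟩
  · exact Units.ext (smul_left_injective K hv congr($hcc'.1.1.1))
  · obtain ⟨c, hc⟩ := (oneAddVecMulVec_eq_iff hv hw hwv p.1.2.2.2).mp
      ((congrArg Subtype.val p.2).trans hg)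
    exact ⟨c, Subtype.ext (Subtype.ext (Prod.ext hc.1.symm hc.2.symm))⟩

end Matrix.GeneralLinearGroup

end Field

open Matrix.GeneralLinearGroup in
theorem stmt_6_general (F : Type*) [Field F] [Fintype F]
    {n : ℕ} (hn : 2 ≤ n)
    (d : Matrix.GeneralLinearGroup (Fin n) F)
    (hd : (d : Matrix (Fin n) (Fin n) F)
        = Matrix.of (fun i j : Fin n =>
            if i = j then 1 else if (i : ℕ) = 0 ∧ (j : ℕ) = 1 then (1 : F) else 0)) :
    Nat.card {g : Matrix.GeneralLinearGroup (Fin n) F // IsConj d g}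
        * (Fintype.card F - 1)
      = (Fintype.card F ^ n - 1) * (Fintype.card F ^ (n - 1) - 1) := by
  let i₀ : Fin n := ⟨0, by omega⟩
  let i₁ : Fin n := ⟨1, by omega⟩
  have hd' : (d : Matrix (Fin n) (Fin n) F) = 1 + vecMulVec (Pi.single i₀ 1) (Pi.single i₁ 1) := by
    ext a b
    simp [hd, one_apply, vecMulVec_apply, Pi.single_apply, Fin.ext_iff, i₀, i₁]
    split_ifs <;> (try simp) <;> omega
  have := card_transvectionPairs_eq_card_isConj_mul (by simp [i₀, i₁, Fin.ext_iff]) hd'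
  rwa [card_transvectionPairs, Nat.card_units, Nat.card_eq_fintype_card (α := F),
    Fintype.card_fin, eq_comm] at this

theorem stmt_6 (F : Type*) [Field F] [Fintype F] [DecidableEq F]
    {n : ℕ} (hn : 2 ≤ n)
    (d : Matrix.GeneralLinearGroup (Fin n) F)
    (hd : (d : Matrix (Fin n) (Fin n) F)
        = Matrix.of (fun i j : Fin n =>
            if i = j then 1 else if (i : ℕ) = 0 ∧ (j : ℕ) = 1 then (1 : F) else 0)) :
    Nat.card {g : Matrix.GeneralLinearGroup (Fin n) F // IsConj d g}
        * (Fintype.card F - 1)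
      = (Fintype.card F ^ n - 1) * (Fintype.card F ^ (n - 1) - 1) :=
  stmt_6_general F hn d hd
end

section
/- Let k be a field of characteristic p > 0, and let N ⊆ k[x_1, ..., x_n] be a graded subspace closed under multiplication by k[x_1,...,x_n] (an ideal) and stable under all partial derivatives ∂/∂x_i. Then N is generated as an ideal by elements of the form f(x_1^p, ..., x_n^p), i.e., by p-th power polynomials f^p with f ∈ k[x_1,...,x_n]. -/
/-!
The Euler operator `X i * ∂ᵢ` multiplies the monomial `X^d` by `d i`, so the operators generated
by the Euler operators and scalars act on coefficients through polynomial functions of the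
exponent `d`. By Fermat's little theorem the indicator of each residue class of exponents mod `p`
is such a function, so `N` contains the residue-class components of its elements. A component `φ`
of class `c` with `c i ≠ 0` satisfies `X i * ∂ᵢ φ = c i • φ`, hence `φ = X i * (c i)⁻¹ ∂ᵢ φ`
with `∂ᵢ φ ∈ N` of class `c - eᵢ`. Descending to the class `0` leaves elements of `N` all of whose
exponents are divisible by `p`, i.e. `p`-th power polynomials.
-/

open MvPolynomial

namespace MvPolynomial

section ScaleCoeffs

variable {σ R : Type*} [CommSemiring R]

noncomputable def scaleCoeffs (a : (σ →₀ ℕ) → R) (φ : MvPolynomial σ R) : MvPolynomial σ R :=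
  ∑ d ∈ φ.support, monomial d (a d * coeff d φ)

@[simp]
lemma coeff_scaleCoeffs (a : (σ →₀ ℕ) → R) (φ : MvPolynomial σ R) (d : σ →₀ ℕ) :
    coeff d (scaleCoeffs a φ) = a d * coeff d φ := by
  classical
  simp +contextual [scaleCoeffs, coeff_sum, coeff_monomial]

lemma scaleCoeffs_mul (a b : (σ →₀ ℕ) → R) (φ : MvPolynomial σ R) :
    scaleCoeffs (a * b) φ = scaleCoeffs a (scaleCoeffs b φ) := by
  ext d; simp [mul_assoc]

lemma scaleCoeffs_add (a b : (σ →₀ ℕ) → R) (φ : MvPolynomial σ R) :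
    scaleCoeffs (a + b) φ = scaleCoeffs a φ + scaleCoeffs b φ := by
  ext d; simp [add_mul]

lemma scaleCoeffs_const (r : R) (φ : MvPolynomial σ R) :
    scaleCoeffs (fun _ ↦ r) φ = C r * φ := by
  ext d; simp

lemma scaleCoeffs_natCast_apply (i : σ) (φ : MvPolynomial σ R) :
    scaleCoeffs (fun d ↦ (d i : R)) φ = X i * pderiv i φ := by
  classical
  ext d
  rw [coeff_scaleCoeffs, coeff_X_mul', coeff_pderiv]
  split_ifs with h
  · rw [Finsupp.mem_support_iff] at h
    have hd : d - Finsupp.single i 1 + Finsupp.single i 1 = d := by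
      ext j; by_cases hj : j = i <;> simp [hj]; omega
    rw [hd, mul_comm, ← Nat.cast_add_one, Finsupp.tsub_apply, Finsupp.single_eq_same,
      Nat.sub_add_cancel (Nat.one_le_iff_ne_zero.mpr h)]
  · simp_all

variable (N : Ideal (MvPolynomial σ R))

def scaleCoeffsStabilizer : Subalgebra R ((σ →₀ ℕ) → R) where
  carrier := {a | ∀ φ ∈ N, scaleCoeffs a φ ∈ N}
  mul_mem' ha hb φ hφ := by rw [scaleCoeffs_mul]; exact ha _ (hb φ hφ)
  add_mem' ha hb φ hφ := by rw [scaleCoeffs_add]; exact N.add_mem (ha φ hφ) (hb φ hφ)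
  algebraMap_mem' r φ hφ := by
    change scaleCoeffs (fun _ ↦ r) φ ∈ N
    rw [scaleCoeffs_const]
    exact N.mul_mem_left _ hφ

lemma natCast_mem_scaleCoeffsStabilizer (hD : ∀ φ ∈ N, ∀ i, pderiv i φ ∈ N) (i : σ) :
    (fun d ↦ (d i : R)) ∈ scaleCoeffsStabilizer N := fun φ hφ ↦ by
  rw [scaleCoeffs_natCast_apply]
  exact N.mul_mem_left _ (hD φ hφ i)

end ScaleCoeffs

lemma exists_expand_eq_of_dvd {σ R : Type*} [CommSemiring R] {p : ℕ}
    {φ : MvPolynomial σ R} (h : ∀ d ∈ φ.support, ∀ i, p ∣ d i) : ∃ ψ, expand p ψ = φ := by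
  refine ⟨∑ d ∈ φ.support, monomial (d.mapRange (· / p) (Nat.zero_div p)) (coeff d φ), ?_⟩
  conv_rhs => rw [φ.as_sum]
  rw [map_sum]
  refine Finset.sum_congr rfl fun d hd ↦ ?_
  rw [expand_monomial]
  congr
  ext i
  simp [Nat.mul_div_cancel' (h d hd i)]

section Residue

variable {σ : Type*} [DecidableEq σ] (p : ℕ)

def residueWeight : σ → σ → ZMod p := fun i ↦ Pi.single i 1

lemma weight_residueWeight (d : σ →₀ ℕ) :
    Finsupp.weight (residueWeight p) d = fun j ↦ (d j : ZMod p) := by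
  ext j
  rw [Finsupp.weight_apply, Finsupp.sum, Finset.sum_apply, Finset.sum_eq_single j] <;>
    simp +contextual [residueWeight]

variable [Fact p.Prime] {k : Type*} [Field k] [CharP k p]

lemma one_sub_pow_card_sub_one (x : ZMod p) : 1 - x ^ (p - 1) = if x = 0 then 1 else 0 := by
  split_ifs with hx
  · rw [hx, zero_pow (Nat.sub_ne_zero_of_lt (Fact.out : p.Prime).one_lt), sub_zero]
  · rw [ZMod.pow_card_sub_one_eq_one hx, sub_self]

lemma weightedHomogeneousComponent_residueWeight_mem [Fintype σ]
    {N : Ideal (MvPolynomial σ k)} (hD : ∀ φ ∈ N, ∀ i, pderiv i φ ∈ N) (c : σ → ZMod p)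
    {φ : MvPolynomial σ k} (hφ : φ ∈ N) :
    weightedHomogeneousComponent (residueWeight p) c φ ∈ N := by
  classical
  let cast := ZMod.castHom (dvd_refl p) k
  -- By Fermat's little theorem, `ind` is the indicator function of the residue class `c`.
  let ind : (σ →₀ ℕ) → k :=
    ∏ i, (1 - ((fun d ↦ (d i : k)) - algebraMap k _ (cast (c i))) ^ (p - 1))
  have hind : ind ∈ scaleCoeffsStabilizer N :=
    Subalgebra.prod_mem _ fun i _ ↦ Subalgebra.sub_mem _ (Subalgebra.one_mem _) <|
      Subalgebra.pow_mem _ (Subalgebra.sub_mem _ (natCast_mem_scaleCoeffsStabilizer N hD i)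
        (Subalgebra.algebraMap_mem _ _)) _
  have hind_apply (d : σ →₀ ℕ) :
      ind d = if Finsupp.weight (residueWeight p) d = c then 1 else 0 := by
    have hcast : ind d = cast (∏ i, (1 - ((d i : ZMod p) - c i) ^ (p - 1))) := by
      simp [ind, Finset.prod_apply]
    have hc : Finsupp.weight (residueWeight p) d = c ↔ ∀ i, (d i : ZMod p) = c i := by
      rw [weight_residueWeight, _root_.funext_iff]
    simp only [hcast, one_sub_pow_card_sub_one, sub_eq_zero, Fintype.prod_boole, hc]
    split_ifs <;> simp
  convert hind φ hφ using 1
  ext d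
  rw [coeff_weightedHomogeneousComponent, coeff_scaleCoeffs, hind_apply]
  split_ifs <;> simp

lemma IsWeightedHomogeneous.X_mul_pderiv_residueWeight {φ : MvPolynomial σ k} {c : σ → ZMod p}
    (hφ : IsWeightedHomogeneous (residueWeight p) φ c) (i : σ) :
    X i * pderiv i φ = C (ZMod.castHom (dvd_refl p) k (c i)) * φ := by
  ext d
  rw [← scaleCoeffs_natCast_apply, coeff_scaleCoeffs, coeff_C_mul]
  by_cases h : coeff d φ = 0
  · simp [h]
  · rw [← hφ h, weight_residueWeight, map_natCast]

lemma sum_val_sub_residueWeight_lt [Fintype σ] {c : σ → ZMod p} {i : σ} (hi : c i ≠ 0) :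
    ∑ j, ((c - residueWeight p i) j).val < ∑ j, (c j).val := by
  have hlt : (c i - 1).val < (c i).val := by
    have := ZMod.val_pos.mpr hi
    rw [ZMod.val_sub (by rwa [ZMod.val_one]), ZMod.val_one]
    omega
  refine Finset.sum_lt_sum (fun j _ ↦ ?_) ⟨i, Finset.mem_univ i, by simpa [residueWeight]⟩
  rcases eq_or_ne j i with rfl | hj
  · simpa [residueWeight] using hlt.le
  · simp [residueWeight, hj]

theorem mem_span_inter_range_expand_of_isWeightedHomogeneous [Fintype σ]
    {N : Ideal (MvPolynomial σ k)} (hD : ∀ φ ∈ N, ∀ i, pderiv i φ ∈ N) {c : σ → ZMod p}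
    {φ : MvPolynomial σ k} (hφ : IsWeightedHomogeneous (residueWeight p) φ c) (hφN : φ ∈ N) :
    φ ∈ Ideal.span (N ∩ Set.range (expand p)) := by
  induction hn : ∑ i, (c i).val using Nat.strong_induction_on generalizing φ c with
  | _ n ih =>
    by_cases hc : c = 0
    · subst hc
      refine Ideal.subset_span ⟨hφN, exists_expand_eq_of_dvd fun d hd i ↦ ?_⟩
      have hdi := congrFun (hφ (mem_support_iff.mp hd)) i
      rwa [weight_residueWeight, Pi.zero_apply, ZMod.natCast_eq_zero_iff] at hdi
    obtain ⟨i, hi⟩ := Function.ne_iff.mp hc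
    let cast := ZMod.castHom (dvd_refl p) k
    have hci : cast (c i) ≠ 0 := (map_ne_zero cast).mpr hi
    have hψ : IsWeightedHomogeneous (residueWeight p) (C (cast (c i))⁻¹ * pderiv i φ)
        (c - residueWeight p i) :=
      (hφ.pderiv (sub_add_cancel _ _)).C_mul _
    have hφψ : φ = X i * (C (cast (c i))⁻¹ * pderiv i φ) := by
      rw [mul_left_comm, hφ.X_mul_pderiv_residueWeight, ← mul_assoc, ← C_mul,
        inv_mul_cancel₀ hci, C_1, one_mul]
    rw [hφψ]
    exact Ideal.mul_mem_left _ _ <| ih _ (hn ▸ sum_val_sub_residueWeight_lt p hi) hψ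
      (N.mul_mem_left _ (hD φ hφN i)) rfl

theorem eq_span_inter_range_expand_of_pderiv_mem [Fintype σ] {N : Ideal (MvPolynomial σ k)}
    (hD : ∀ φ ∈ N, ∀ i, pderiv i φ ∈ N) : N = Ideal.span (N ∩ Set.range (expand p)) := by
  refine le_antisymm (fun φ hφ ↦ ?_) (Ideal.span_le.mpr Set.inter_subset_left)
  rw [← finsum_weightedHomogeneousComponent (residueWeight p) φ]
  refine finsum_induction _ (zero_mem _) (fun _ _ ↦ add_mem) fun c ↦ ?_
  exact mem_span_inter_range_expand_of_isWeightedHomogeneous p hD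
    (weightedHomogeneousComponent_isWeightedHomogeneous c φ)
    (weightedHomogeneousComponent_residueWeight_mem p hD c hφ)

end Residue

end MvPolynomial

theorem stmt_9_general {k : Type*} [Field k] {p n : ℕ} [Fact p.Prime] [CharP k p]
    (N : Ideal (MvPolynomial (Fin n) k))
    (hD : ∀ f ∈ N, ∀ i : Fin n, MvPolynomial.pderiv i f ∈ N) :
    ∃ S : Set (MvPolynomial (Fin n) k),
      (∀ g ∈ S, ∃ f : MvPolynomial (Fin n) k, g = MvPolynomial.expand p f) ∧
      N = Ideal.span S :=
  ⟨N ∩ Set.range (expand p), fun _ hg ↦ hg.2.imp fun _ ↦ Eq.symm,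
    eq_span_inter_range_expand_of_pderiv_mem p hD⟩

theorem stmt_9 {k : Type*} [Field k] {p n : ℕ} [Fact p.Prime] [CharP k p]
    (N : Ideal (MvPolynomial (Fin n) k))
    (hgr : ∀ f ∈ N, ∀ i : ℕ, MvPolynomial.homogeneousComponent i f ∈ N)
    (hD : ∀ f ∈ N, ∀ i : Fin n, MvPolynomial.pderiv i f ∈ N) :
    ∃ S : Set (MvPolynomial (Fin n) k),
      (∀ g ∈ S, ∃ f : MvPolynomial (Fin n) k, g = MvPolynomial.expand p f) ∧
      N = Ideal.span S :=
  stmt_9_general N hD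
end

section
/- Let k be a field of characteristic p and f ∈ k[x_1, ..., x_n] homogeneous. Writing f = ∑_{i=0}^{p-1} x_1^i f_i(x_1^p, x_2, ..., x_n), if a subspace N containing f is stable under multiplication by x_1 and under ∂/∂x_1, then each summand x_1^i f_i(x_1^p, x_2, ..., x_n) lies in N. -/
/-!
The operator `D = X₀ ∂₀` preserves `N`, and since `∂₀ (X₀ ^ p) = 0` in characteristic `p`, it acts
on the `i`-th summand `X₀ ^ i * fᵢ(X₀ ^ p, X₁, …)` as multiplication by `i`. The eigenvalues
`0, …, p - 1` are distinct in `k`, so applying to `f` the Lagrange interpolation polynomial in `D`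
that is `1` at `i` and `0` at the other residues isolates the `i`-th summand inside `N`.
-/

open Polynomial in
theorem Submodule.aeval_apply_mem {K V : Type*} [CommRing K] [AddCommGroup V] [Module K V]
    {f : Module.End K V} {p : Submodule K V} (hp : ∀ x ∈ p, f x ∈ p) (q : K[X]) {x : V}
    (hx : x ∈ p) : aeval f q x ∈ p := by
  induction q using Polynomial.induction_on with
  | C a => simpa [Module.algebraMap_end_apply] using p.smul_mem a hx
  | add q r hq hr => simpa using p.add_mem hq hr
  | monomial n a ih =>
    rw [pow_succ', mul_left_comm, map_mul, aeval_X, Module.End.mul_apply]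
    exact hp _ ih

open Polynomial in
theorem Submodule.mem_of_sum_mem_of_apply_eq_smul {K V ι : Type*} [Field K] [AddCommGroup V]
    [Module K V] [DecidableEq ι] {f : Module.End K V} {p : Submodule K V}
    (hp : ∀ x ∈ p, f x ∈ p) {s : Finset ι} {μ : ι → K} (hμ : Set.InjOn μ s) {v : ι → V}
    (hv : ∀ i ∈ s, f (v i) = μ i • v i) (hsum : ∑ i ∈ s, v i ∈ p) {i : ι} (hi : i ∈ s) :
    v i ∈ p := by
  have hproj : aeval f (Lagrange.basis s μ i) (∑ j ∈ s, v j) = v i := by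
    rw [map_sum, Finset.sum_eq_single_of_mem i hi]
    · rw [Module.End.aeval_apply_of_mem_apply_eq_smul (hv i hi), Lagrange.eval_basis_self hμ hi,
        one_smul]
    · intro j hj hji
      rw [Module.End.aeval_apply_of_mem_apply_eq_smul (hv j hj),
        Lagrange.eval_basis_of_ne hji.symm hj, zero_smul]
  exact hproj ▸ p.aeval_apply_mem hp _ hsum

theorem Derivation.map_aeval_eq_zero {R A M σ : Type*} [CommSemiring R] [CommSemiring A]
    [Algebra R A] [AddCommMonoid M] [Module A M] [Module R M] [IsScalarTower R A M]
    (D : Derivation R A M) {u : σ → A} (hu : ∀ j, D (u j) = 0) (q : MvPolynomial σ R) :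
    D (MvPolynomial.aeval u q) = 0 := by
  have hadj : MvPolynomial.aeval u q ∈ Algebra.adjoin R (Set.range u) := by
    rw [← MvPolynomial.aeval_range]; exact ⟨q, rfl⟩
  exact D.eqOn_adjoin (D2 := 0) (by rintro - ⟨j, rfl⟩; exact hu j) hadj

namespace MvPolynomial

theorem X_mul_pderiv_X_pow_mul {k σ : Type*} [CommRing k] [DecidableEq σ] (i : σ) (m : ℕ)
    {q : MvPolynomial σ k} (hq : pderiv i q = 0) :
    X i * pderiv i (X i ^ m * q) = (m : k) • (X i ^ m * q) := by
  rcases m with _ | m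
  · simp [hq]
  · simp [hq, smul_eq_C_mul]; ring

end MvPolynomial

open MvPolynomial

theorem stmt_10_general {k : Type*} [Field k] {p n : ℕ} [CharP k p]
    (N : Submodule k (MvPolynomial (Fin (n + 1)) k))
    (hx : ∀ f ∈ N, MvPolynomial.X 0 * f ∈ N)
    (hd : ∀ f ∈ N, MvPolynomial.pderiv 0 f ∈ N)
    (f : MvPolynomial (Fin (n + 1)) k) (hf : f ∈ N)
    (g : ℕ → MvPolynomial (Fin (n + 1)) k)
    (hdecomp : f = ∑ i ∈ Finset.range p, MvPolynomial.X 0 ^ i *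
        (MvPolynomial.aeval (fun j : Fin (n + 1) =>
            if j = 0 then (MvPolynomial.X 0 : MvPolynomial (Fin (n + 1)) k) ^ p
            else MvPolynomial.X j) (g i))) :
    ∀ i ∈ Finset.range p,
      MvPolynomial.X 0 ^ i *
        (MvPolynomial.aeval (fun j : Fin (n + 1) =>
            if j = 0 then (MvPolynomial.X 0 : MvPolynomial (Fin (n + 1)) k) ^ p
            else MvPolynomial.X j) (g i)) ∈ N := by
  intro i hi
  have hconst : ∀ q, pderiv 0 (aeval (fun j : Fin (n + 1) =>
      if j = 0 then (X 0 : MvPolynomial (Fin (n + 1)) k) ^ p else X j) q) = 0 :=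
    (pderiv 0).map_aeval_eq_zero fun j => by
      by_cases hj : j = 0 <;> simp [hj, pderiv_X]
  have hinj : Set.InjOn (fun i : ℕ => (i : k)) (Finset.range p) := fun a ha b hb =>
    CharP.natCast_injOn_Iio k p (by simpa using ha) (by simpa using hb)
  exact N.mem_of_sum_mem_of_apply_eq_smul
    (f := LinearMap.mulLeft k (X 0) ∘ₗ (pderiv 0).toLinearMap) (fun q hq => hx _ (hd q hq)) hinj
    (fun i _ => X_mul_pderiv_X_pow_mul 0 i (hconst (g i))) (hdecomp ▸ hf) hi

theorem stmt_10 {k : Type*} [Field k] {p n : ℕ} [Fact p.Prime] [CharP k p]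
    (N : Submodule k (MvPolynomial (Fin (n + 1)) k))
    (hx : ∀ f ∈ N, MvPolynomial.X 0 * f ∈ N)
    (hd : ∀ f ∈ N, MvPolynomial.pderiv 0 f ∈ N)
    (f : MvPolynomial (Fin (n + 1)) k) (hf : f ∈ N)
    (e : ℕ) (hfh : f.IsHomogeneous e)
    (g : ℕ → MvPolynomial (Fin (n + 1)) k)
    (hdecomp : f = ∑ i ∈ Finset.range p, MvPolynomial.X 0 ^ i *
        (MvPolynomial.aeval (fun j : Fin (n + 1) =>
            if j = 0 then (MvPolynomial.X 0 : MvPolynomial (Fin (n + 1)) k) ^ p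
            else MvPolynomial.X j) (g i))) :
    ∀ i ∈ Finset.range p,
      MvPolynomial.X 0 ^ i *
        (MvPolynomial.aeval (fun j : Fin (n + 1) =>
            if j = 0 then (MvPolynomial.X 0 : MvPolynomial (Fin (n + 1)) k) ^ p
            else MvPolynomial.X j) (g i)) ∈ N :=
  stmt_10_general N hx hd f hf g hdecomp
end

section
/- Let A = ⊕_{i=0}^{d} A_i be a finite-dimensional graded commutative algebra over a field with A_0 = k. Then A is Frobenius (i.e., A_d is one-dimensional and the multiplication pairing A_i × A_{d-i} → A_d is non-degenerate for all i) if and only if the annihilator in A of the augmentation ideal A_+ = ⊕_{i>0} A_i is one-dimensional. -/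
/-!
The annihilator of `A₊` contains the top piece `A_d`, since `A_i A_d ⊆ A_{d+i} = 0` for `i > 0`.
If the pairings are perfect, it is no bigger: a homogeneous component of degree `i < d` of an
annihilating element kills `A_{d-i}`, hence vanishes, so the annihilator is `A_d`, which is a line.
Conversely, if the annihilator is a line, it is `A_d`. Given `0 ≠ x ∈ A_i`, choose `n` maximal
with `x A_n ≠ 0` (it exists, as `x · 1 ≠ 0` and `A` lives in degrees `≤ d`); then every nonzero
`x y` with `y ∈ A_n` annihilates `A₊`, so it lies in `A_i A_n ∩ A_d`, forcing `n = d - i`.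
-/

open DirectSum

namespace GradedAlgebra

variable {R A : Type*} [CommSemiring R] [Semiring A] [Algebra R A] (𝒜 : ℕ → Submodule R A)

def AnnihilatesPositive (a : A) : Prop :=
  ∀ i : ℕ, 0 < i → ∀ b ∈ 𝒜 i, a * b = 0

variable {𝒜} {d : ℕ}

theorem eq_zero_of_mem_of_lt (habove : ∀ i, d < i → 𝒜 i = ⊥) {i : ℕ} (hi : d < i) {x : A}
    (hx : x ∈ 𝒜 i) : x = 0 := by
  rwa [habove i hi, Submodule.mem_bot] at hx

variable [GradedAlgebra 𝒜]

theorem annihilatesPositive_of_mem (habove : ∀ i, d < i → 𝒜 i = ⊥) {a : A} (ha : a ∈ 𝒜 d) :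
    AnnihilatesPositive 𝒜 a := fun _ hi _ hb =>
  eq_zero_of_mem_of_lt habove (Nat.lt_add_of_pos_right hi) (SetLike.mul_mem_graded ha hb)

theorem decompose_mul_eq_zero_of_mul_eq_zero {a b : A} {j : ℕ} (hb : b ∈ 𝒜 j) (hab : a * b = 0)
    (i : ℕ) : (decompose 𝒜 a i : A) * b = 0 := by
  rw [← coe_decompose_mul_add_of_right_mem 𝒜 hb, hab, decompose_zero, DirectSum.zero_apply,
    ZeroMemClass.coe_zero]

theorem mem_of_decompose_eq_zero {x : A} (h : ∀ i ≠ d, (decompose 𝒜 x i : A) = 0) :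
    x ∈ 𝒜 d := by
  have hx : decompose 𝒜 x = of (fun i => 𝒜 i) d (decompose 𝒜 x d) := by
    ext i
    rcases eq_or_ne i d with rfl | hi
    · rw [of_eq_same]
    · rw [of_eq_of_ne _ _ _ hi, h i hi, ZeroMemClass.coe_zero]
  rw [← (decompose 𝒜).symm_apply_apply x, hx, decompose_symm_of]
  exact SetLike.coe_mem _

theorem mem_of_annihilatesPositive (habove : ∀ i, d < i → 𝒜 i = ⊥)
    (hpair : ∀ i ≤ d, ∀ a ∈ 𝒜 i, (∀ b ∈ 𝒜 (d - i), a * b = 0) → a = 0) {a : A}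
    (ha : AnnihilatesPositive 𝒜 a) : a ∈ 𝒜 d := by
  refine mem_of_decompose_eq_zero fun i hi => ?_
  rcases hi.lt_or_gt with hlt | hgt
  · exact hpair i hlt.le _ (SetLike.coe_mem _) fun b hb =>
      decompose_mul_eq_zero_of_mul_eq_zero hb (ha (d - i) (Nat.sub_pos_of_lt hlt) b hb) i
  · exact eq_zero_of_mem_of_lt habove hgt (SetLike.coe_mem _)

theorem exists_mul_ne_zero_annihilatesPositive (habove : ∀ i, d < i → 𝒜 i = ⊥) {x : A}
    (hx : x ≠ 0) : ∃ n, ∃ y ∈ 𝒜 n, x * y ≠ 0 ∧ AnnihilatesPositive 𝒜 (x * y) := by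
  classical
  let P : ℕ → Prop := fun n => ∃ y ∈ 𝒜 n, x * y ≠ 0
  have hP0 : P 0 := ⟨1, SetLike.one_mem_graded 𝒜, by rwa [mul_one]⟩
  obtain ⟨y, hy, hxy⟩ : P (Nat.findGreatest P d) := Nat.findGreatest_spec (Nat.zero_le d) hP0
  refine ⟨_, y, hy, hxy, fun j hj b hb => ?_⟩
  have hm : Nat.findGreatest P d < Nat.findGreatest P d + j := Nat.lt_add_of_pos_right hj
  have hyb := SetLike.mul_mem_graded hy hb
  rw [mul_assoc]
  by_cases hmd : Nat.findGreatest P d + j ≤ d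
  · by_contra hne
    exact Nat.findGreatest_is_greatest hm hmd ⟨_, hyb, hne⟩
  · rw [eq_zero_of_mem_of_lt habove (not_le.mp hmd) hyb, mul_zero]

theorem eq_zero_of_forall_mul_eq_zero (habove : ∀ i, d < i → 𝒜 i = ⊥)
    (hann : ∀ a, AnnihilatesPositive 𝒜 a → a ∈ 𝒜 d) {i : ℕ} {a : A} (ha : a ∈ 𝒜 i)
    (h : ∀ b ∈ 𝒜 (d - i), a * b = 0) : a = 0 := by
  by_contra hne
  obtain ⟨n, y, hy, hay, hay_ann⟩ := exists_mul_ne_zero_annihilatesPositive habove hne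
  have hdeg : i + n = d :=
    degree_eq_of_mem_mem 𝒜 (SetLike.mul_mem_graded ha hy) (hann _ hay_ann) hay
  exact hay (h y (by rwa [← hdeg, Nat.add_sub_cancel_left]))

theorem forall_mem_of_annihilatesPositive_iff (habove : ∀ i, d < i → 𝒜 i = ⊥) :
    (∀ a, AnnihilatesPositive 𝒜 a → a ∈ 𝒜 d) ↔
      ∀ i ≤ d, ∀ a ∈ 𝒜 i, (∀ b ∈ 𝒜 (d - i), a * b = 0) → a = 0 :=
  ⟨fun hann _ _ _ ha h => eq_zero_of_forall_mul_eq_zero habove hann ha h,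
    fun hpair _ ha => mem_of_annihilatesPositive habove hpair ha⟩

end GradedAlgebra

open GradedAlgebra

theorem stmt_11_general {k A : Type*} [Field k] [CommRing A] [Algebra k A]
    (𝒜 : ℕ → Submodule k A) [GradedAlgebra 𝒜]
    (d : ℕ) (htop : 𝒜 d ≠ ⊥) (habove : ∀ i : ℕ, d < i → 𝒜 i = ⊥) :
    (Module.finrank k (𝒜 d) = 1 ∧
      ∀ i ≤ d, ∀ a ∈ 𝒜 i, (∀ b ∈ 𝒜 (d - i), a * b = 0) → a = 0)
    ↔ (∃ a : A, a ≠ 0 ∧ (∀ i : ℕ, 0 < i → ∀ b ∈ 𝒜 i, a * b = 0) ∧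
        ∀ a' : A, (∀ i : ℕ, 0 < i → ∀ b ∈ 𝒜 i, a' * b = 0) →
          ∃ c : k, a' = c • a) := by
  rw [← forall_mem_of_annihilatesPositive_iff habove]
  obtain ⟨x, hx, hx0⟩ := Submodule.exists_mem_ne_zero_of_ne_bot htop
  constructor
  · rintro ⟨hrank, hann⟩
    refine ⟨x, hx0, annihilatesPositive_of_mem habove hx, fun a' ha' => ?_⟩
    obtain ⟨c, hc⟩ := (finrank_eq_one_iff_of_nonzero' (⟨x, hx⟩ : 𝒜 d)
      (Subtype.coe_ne_coe.mp hx0)).mp hrank ⟨a', hann a' ha'⟩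
    exact ⟨c, (congrArg Subtype.val hc).symm⟩
  · rintro ⟨a, ha0, -, hline⟩
    obtain ⟨c, rfl⟩ := hline x (annihilatesPositive_of_mem habove hx)
    have had : a ∈ 𝒜 d := (Submodule.smul_mem_iff _ (left_ne_zero_of_smul hx0)).mp hx
    refine ⟨(finrank_eq_one_iff_of_nonzero' (⟨a, had⟩ : 𝒜 d) (Subtype.coe_ne_coe.mp ha0)).mpr
      fun w => ?_, fun y hy => ?_⟩
    · obtain ⟨c', hc'⟩ := hline w (annihilatesPositive_of_mem habove w.2)
      exact ⟨c', Subtype.ext hc'.symm⟩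
    · obtain ⟨c', rfl⟩ := hline y hy
      exact Submodule.smul_mem _ c' had

theorem stmt_11 {k A : Type*} [Field k] [CommRing A] [Algebra k A]
    [FiniteDimensional k A] (𝒜 : ℕ → Submodule k A) [GradedAlgebra 𝒜]
    (d : ℕ) (h0 : 𝒜 0 = Submodule.span k {(1 : A)})
    (htop : 𝒜 d ≠ ⊥) (habove : ∀ i : ℕ, d < i → 𝒜 i = ⊥) :
    (Module.finrank k (𝒜 d) = 1 ∧
      ∀ i ≤ d, ∀ a ∈ 𝒜 i, (∀ b ∈ 𝒜 (d - i), a * b = 0) → a = 0)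
    ↔ (∃ a : A, a ≠ 0 ∧ (∀ i : ℕ, 0 < i → ∀ b ∈ 𝒜 i, a * b = 0) ∧
        ∀ a' : A, (∀ i : ℕ, 0 < i → ∀ b ∈ 𝒜 i, a' * b = 0) →
          ∃ c : k, a' = c • a) :=
  stmt_11_general 𝒜 d htop habove
end
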